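/- Let I, ξ, and permutations α ∈ Sym(I), β ∈ Sym({a,b,c}) be given, and define ζ(i,j) = β ∘ ξ(α⁻¹(i), α⁻¹(j)) ∘ β⁻¹. Then the map F sending x_i ↦ (β(x))_{α(i)}, q^x ↦ q^{β(x)}, q^{i,j} ↦ q^{α(i),α(j)} is an isomorphism of T(I, ξ, G_2(I)) onto T(I, ζ, G_2(I)). -/

import Mathlib

/-! Systems of triangle perspectives (STP). The letter set 𝒯 = {a,b,c} is
encoded as `Fin 3`. Points: `q^x` (the base line), `x_i`, and `q^{i,j}`
for 2-subsets `{i,j}` of `I`. -/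

/-- 2-subsets of `I`. -/
abbrev P2 (I : Type*) [DecidableEq I] := {z : Finset I // z.card = 2}

/-- The point set of a system of triangle perspectives over index set `I`. -/
abbrev STPPoint (I : Type*) [DecidableEq I] := Fin 3 ⊕ ((Fin 3 × I) ⊕ P2 I)

variable {I : Type*} [Fintype I] [DecidableEq I]

/-- The point `q^x` on the base line. -/
def qpt (x : Fin 3) : STPPoint I := Sum.inl x

/-- The point `x_i` (vertex `x` of the `i`-th triangle). -/
def xpt (x : Fin 3) (i : I) : STPPoint I := Sum.inr (Sum.inl (x, i))

/-- The point `q^z` for a 2-subset `z` of `I`. -/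
def cpt (z : P2 I) : STPPoint I := Sum.inr (Sum.inr z)

/-- The perspective center `q^{i,j}`. -/
def qq (i j : I) (h : i ≠ j) : STPPoint I := cpt ⟨{i, j}, Finset.card_pair h⟩

/-- The base line `L = {q^a, q^b, q^c}`. -/
def baseLine : Finset (STPPoint I) := {qpt 0, qpt 1, qpt 2}

/-- The line `X_i = {q^y, q^z, x_i}` (where `{x,y,z} = {a,b,c}`) of the Veblen
configuration `𝒱^i`. -/
def veblenLine (x : Fin 3) (i : I) : Finset (STPPoint I) :=
  insert (xpt x i) ((Finset.univ.filter (fun y => y ≠ x)).image qpt)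

/-- The perspective ray `{q^{i,j}, x_i, (ξ(i,j)(x))_j}`. -/
def ray (ξ : I → I → Equiv.Perm (Fin 3)) (i j : I) (h : i ≠ j) (x : Fin 3) :
    Finset (STPPoint I) := {qq i j h, xpt x i, xpt (ξ i j x) j}

/-- The lines of the simple system of triangle perspectives `T(I, ξ, G_2(I))`:
the base line, the Veblen lines, the perspective rays, and the Grassmannian
lines `{q^{i,j}, q^{j,l}, q^{i,l}}`. -/
def STPlines (ξ : I → I → Equiv.Perm (Fin 3)) : Set (Finset (STPPoint I)) :=
  {L | L = baseLine} ∪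
  {L | ∃ x i, L = veblenLine x i} ∪
  {L | ∃ i j, ∃ h : i ≠ j, ∃ x, L = ray ξ i j h x} ∪
  {L | ∃ i j l, ∃ hij : i ≠ j, ∃ hjl : j ≠ l, ∃ hil : i ≠ l,
    L = {qq i j hij, qq j l hjl, qq i l hil}}

/-- Two points are collinear if they lie on a common line. -/
def STPCollinear (ξ : I → I → Equiv.Perm (Fin 3)) (p q : STPPoint I) : Prop :=
  ∃ L ∈ STPlines ξ, p ∈ L ∧ q ∈ L

/-- The set `𝒦_i = {a_i, b_i, c_i} ∪ {q^{i,j} : j ≠ i}`. -/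
def Kset (i : I) : Finset (STPPoint I) :=
  {xpt 0 i, xpt 1 i, xpt 2 i} ∪
    (Finset.univ.filter (fun z : P2 I => i ∈ z.1)).image cpt

/-- `Y` induces a complete graph freely contained in the configuration with
line set `Lines`: each edge (2-subset) of `Y` lies on a unique line, and
lines of edges meet only when the edges share a vertex in `Y`. -/
def FreelyContains (Lines : Set (Finset (STPPoint I))) (Y : Finset (STPPoint I)) : Prop :=
  (∀ e ∈ Y.powersetCard 2, ∃! L, L ∈ Lines ∧ e ⊆ L) ∧
  (∀ e₁ ∈ Y.powersetCard 2, ∀ e₂ ∈ Y.powersetCard 2, ∀ L₁ ∈ Lines, ∀ L₂ ∈ Lines,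
    e₁ ⊆ L₁ → e₂ ⊆ L₂ → (L₁ ∩ L₂).Nonempty → (e₁ ∩ e₂).Nonempty)

/-- The point map `x_i ↦ (β x)_{α i}`, `q^x ↦ q^{β x}`,
`q^{i,j} ↦ q^{α i, α j}` induced by `α ∈ Sym(I)`, `β ∈ Sym({a,b,c})`. -/
def Fmap (α : Equiv.Perm I) (β : Equiv.Perm (Fin 3)) : STPPoint I → STPPoint I
  | Sum.inl x => Sum.inl (β x)
  | Sum.inr (Sum.inl (x, i)) => Sum.inr (Sum.inl (β x, α i))
  | Sum.inr (Sum.inr z) => Sum.inr (Sum.inr ⟨z.1.image α, by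
      rw [Finset.card_image_of_injective _ α.injective, z.2]⟩)

/-! `Fmap α β` has inverse `Fmap α⁻¹ β⁻¹` and sends each of the four kinds of lines of
`T(I, ξ, G_2(I))` to a line of the same kind of `T(I, ζ, G_2(I))`; the twist `ζ` is exactly what
makes rays go to rays. Since `ξ` is recovered from `ζ` by the same recipe with `α⁻¹, β⁻¹`,
applying this to the inverse map gives the converse. -/

section Fmap

variable {I : Type*} [DecidableEq I] (α : Equiv.Perm I) (β : Equiv.Perm (Fin 3))

lemma Fmap_leftInverse : Function.LeftInverse (Fmap α⁻¹ β⁻¹) (Fmap α β) := by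
  rintro (x | ⟨x, i⟩ | z) <;> simp [Fmap, Finset.image_image]

lemma Fmap_bijective : Function.Bijective (Fmap α β) := by
  have hright : Function.LeftInverse (Fmap α β) (Fmap α⁻¹ β⁻¹) := by
    simpa using Fmap_leftInverse α⁻¹ β⁻¹
  exact ⟨(Fmap_leftInverse α β).injective, hright.surjective⟩

lemma Fmap_comp_qpt : Fmap α β ∘ qpt = (qpt ∘ β : Fin 3 → STPPoint I) := rfl

lemma Fmap_xpt (x : Fin 3) (i : I) : Fmap α β (xpt x i) = xpt (β x) (α i) := rfl

lemma Fmap_qq (i j : I) (h : i ≠ j) :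
    Fmap α β (qq i j h) = qq (α i) (α j) (α.injective.ne h) := by
  simp [qq, cpt, Fmap]

lemma baseLine_eq_image_univ : (baseLine : Finset (STPPoint I)) = Finset.univ.image qpt := by
  ext p
  simp only [baseLine, Finset.mem_insert, Finset.mem_singleton, Finset.mem_image,
    Finset.mem_univ, true_and]
  constructor
  · rintro (rfl | rfl | rfl) <;> exact ⟨_, rfl⟩
  · rintro ⟨x, rfl⟩
    fin_cases x <;> simp

lemma image_Fmap_baseLine : (baseLine : Finset (STPPoint I)).image (Fmap α β) = baseLine := by
  rw [baseLine_eq_image_univ, Finset.image_image, Fmap_comp_qpt, ← Finset.image_image,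
    Finset.image_univ_equiv]

lemma image_Fmap_veblenLine (x : Fin 3) (i : I) :
    (veblenLine x i : Finset (STPPoint I)).image (Fmap α β) = veblenLine (β x) (α i) := by
  simp only [veblenLine, Finset.filter_ne', Finset.image_insert, Finset.image_image,
    Fmap_comp_qpt]
  rw [← Finset.image_image, Finset.image_erase β.injective, Finset.image_univ_equiv]
  rfl

lemma image_Fmap_ray {ξ ζ : I → I → Equiv.Perm (Fin 3)}
    (hζ : ∀ i j, ζ i j = β * ξ (α⁻¹ i) (α⁻¹ j) * β⁻¹) (i j : I) (h : i ≠ j) (x : Fin 3) :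
    (ray ξ i j h x).image (Fmap α β) = ray ζ (α i) (α j) (α.injective.ne h) (β x) := by
  have hray : ζ (α i) (α j) (β x) = β (ξ i j x) := by simp [hζ]
  simp only [ray, Finset.image_insert, Finset.image_singleton, Fmap_qq, Fmap_xpt, hray]

lemma image_Fmap_mem_STPlines {ξ ζ : I → I → Equiv.Perm (Fin 3)}
    (hζ : ∀ i j, ζ i j = β * ξ (α⁻¹ i) (α⁻¹ j) * β⁻¹) {L : Finset (STPPoint I)}
    (hL : L ∈ STPlines ξ) : L.image (Fmap α β) ∈ STPlines ζ := by
  rcases hL with ((rfl | ⟨x, i, rfl⟩) | ⟨i, j, h, x, rfl⟩) | ⟨i, j, l, hij, hjl, hil, rfl⟩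
  · exact Or.inl (Or.inl (Or.inl (image_Fmap_baseLine α β)))
  · exact Or.inl (Or.inl (Or.inr ⟨β x, α i, image_Fmap_veblenLine α β x i⟩))
  · exact Or.inl (Or.inr ⟨α i, α j, _, β x, image_Fmap_ray α β hζ i j h x⟩)
  · refine Or.inr ⟨α i, α j, α l, α.injective.ne hij, α.injective.ne hjl,
      α.injective.ne hil, ?_⟩
    simp only [Finset.image_insert, Finset.image_singleton, Fmap_qq]

end Fmap

theorem stmt_8_general (ξ ζ : I → I → Equiv.Perm (Fin 3))
    (α : Equiv.Perm I) (β : Equiv.Perm (Fin 3))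
    (hζ : ∀ i j, ζ i j = β * ξ (α⁻¹ i) (α⁻¹ j) * β⁻¹) :
    Function.Bijective (Fmap α β : STPPoint I → STPPoint I) ∧
    (∀ L : Finset (STPPoint I),
      L ∈ STPlines ξ ↔ L.image (Fmap α β) ∈ STPlines ζ) := by
  have hξ : ∀ i j, ξ i j = β⁻¹ * ζ (α⁻¹⁻¹ i) (α⁻¹⁻¹ j) * β⁻¹⁻¹ := by
    simp [hζ, mul_assoc]
  refine ⟨Fmap_bijective α β, fun L => ⟨image_Fmap_mem_STPlines α β hζ, fun hL => ?_⟩⟩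
  have hback := image_Fmap_mem_STPlines α⁻¹ β⁻¹ hξ hL
  rwa [Finset.image_image, (Fmap_leftInverse α β).comp_eq_id, Finset.image_id] at hback

/-- With `ζ(i,j) = β ∘ ξ(α⁻¹ i, α⁻¹ j) ∘ β⁻¹`, the map `Fmap α β` is an
isomorphism of `T(I, ξ, G_2(I))` onto `T(I, ζ, G_2(I))`: a bijection of points
inducing a bijection of lines. -/
theorem stmt_8 (ξ ζ : I → I → Equiv.Perm (Fin 3))
    (hξ1 : ∀ i, ξ i i = 1) (hξ2 : ∀ i j, ξ j i = (ξ i j)⁻¹)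
    (α : Equiv.Perm I) (β : Equiv.Perm (Fin 3))
    (hζ : ∀ i j, ζ i j = β * ξ (α⁻¹ i) (α⁻¹ j) * β⁻¹) :
    Function.Bijective (Fmap α β : STPPoint I → STPPoint I) ∧
    (∀ L : Finset (STPPoint I),
      L ∈ STPlines ξ ↔ L.image (Fmap α β) ∈ STPlines ζ) :=
  stmt_8_general ξ ζ α β hζ
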